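/- Let a, b ∈ ℝ, k ≥ 2, and let μ_1, …, μ_k > 0 with Σ_i μ_i = 1. Let p_1, …, p_k ∈ ℝ², p_i = (x_i, y_i), be pairwise distinct and satisfy the anisotropic central configuration equations: for every i, a x_i = Σ_{j≠i} μ_j (x_i − x_j)/r_{ij}³ and b y_i = Σ_{j≠i} μ_j (y_i − y_j)/r_{ij}³, where r_{ij} = |p_i − p_j|. Then: (1) a · Σ_i μ_i x_i² = a · Σ_{i<j} μ_i μ_j (x_i − x_j)² = Σ_{i<j} (μ_i μ_j / r_{ij}³)(x_i − x_j)²; (2) b · Σ_i μ_i y_i² = b · Σ_{i<j} μ_i μ_j (y_i − y_j)² = Σ_{i<j} (μ_i μ_j / r_{ij}³)(y_i − y_j)²; (3) a · Σ_i μ_i x_i² + b · Σ_i μ_i y_i² = Σ_{i<j} μ_i μ_j / r_{ij}. -/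
import Mathlib


open Finset

abbrev E2 : Type := EuclideanSpace ℝ (Fin 2)

/-- The anisotropic central configuration equations for points `p_i = (x_i, y_i)`:
`a x_i = Σ_{j≠i} μ_j (x_i − x_j)/r_{ij}³` and `b y_i = Σ_{j≠i} μ_j (y_i − y_j)/r_{ij}³`. -/
def AnisoCC {k : ℕ} (a b : ℝ) (μ : Fin k → ℝ) (p : Fin k → E2) : Prop :=
  ∀ i, (a * p i 0 = ∑ j ∈ Finset.univ.filter (· ≠ i), μ j * (p i 0 - p j 0) / ‖p i - p j‖ ^ 3) ∧
       (b * p i 1 = ∑ j ∈ Finset.univ.filter (· ≠ i), μ j * (p i 1 - p j 1) / ‖p i - p j‖ ^ 3)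

lemma pairsum {k : ℕ} (f : Fin k → Fin k → ℝ) :
    ∑ i, ∑ j ∈ Finset.univ.filter (· ≠ i), f i j
      = ∑ i, ∑ j ∈ Finset.univ.filter (fun j => i < j), (f i j + f j i) := by
  have hsplit : ∀ i : Fin k,
      ∑ j ∈ Finset.univ.filter (· ≠ i), f i j
        = ∑ j ∈ Finset.univ.filter (fun j => i < j), f i j
          + ∑ j ∈ Finset.univ.filter (fun j => j < i), f i j := by
    intro i
    rw [← Finset.sum_union]
    · apply Finset.sum_congr _ (fun _ _ => rfl)
      ext j
      simp only [mem_filter, mem_union, mem_univ, true_and]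
      constructor
      · intro h; rcases lt_or_gt_of_ne h with h1 | h1
        · exact Or.inr h1
        · exact Or.inl h1
      · rintro (h | h) <;> [exact ne_of_gt h; exact ne_of_lt h]
    · simp only [Finset.disjoint_filter, mem_filter]
      intro j _ h1 h2
      exact absurd (h1.trans h2) (lt_irrefl i)
  simp only [hsplit, Finset.sum_add_distrib]
  congr 1
  calc ∑ i, ∑ j ∈ Finset.univ.filter (fun j => j < i), f i j
      = ∑ i, ∑ j, if j < i then f i j else 0 := by
        simp [Finset.sum_filter]
    _ = ∑ j, ∑ i, if j < i then f i j else 0 := Finset.sum_comm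
    _ = ∑ j, ∑ i ∈ Finset.univ.filter (fun i => j < i), f i j := by
        simp [Finset.sum_filter]

lemma sq_expand {k : ℕ} (μ x : Fin k → ℝ) (hμsum : ∑ i, μ i = 1) :
    ∑ i, ∑ j ∈ Finset.univ.filter (fun j => i < j), μ i * μ j * (x i - x j) ^ 2
      = (∑ i, μ i * x i ^ 2) - (∑ i, μ i * x i) ^ 2 := by
  have hfull : ∑ i, ∑ j, μ i * μ j * (x i - x j) ^ 2
      = 2 * (∑ i, μ i * x i ^ 2) - 2 * (∑ i, μ i * x i) ^ 2 := by
    have h : ∀ i ∈ Finset.univ, ∑ j, μ i * μ j * (x i - x j) ^ 2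
        = μ i * x i ^ 2 * (∑ j, μ j) + μ i * (∑ j, μ j * x j ^ 2)
          - (μ i * x i) * (2 * ∑ j, μ j * x j) := by
      intro i _
      simp only [Finset.mul_sum, ← Finset.sum_sub_distrib, ← Finset.sum_add_distrib]
      exact Finset.sum_congr rfl fun j _ => by ring
    rw [Finset.sum_congr rfl h, Finset.sum_sub_distrib, Finset.sum_add_distrib,
      ← Finset.sum_mul, ← Finset.sum_mul, ← Finset.sum_mul, hμsum]
    ring
  have hdiag : ∑ i, ∑ j ∈ Finset.univ.filter (· ≠ i), μ i * μ j * (x i - x j) ^ 2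
      = ∑ i, ∑ j, μ i * μ j * (x i - x j) ^ 2 := by
    apply Finset.sum_congr rfl
    intro i _
    rw [Finset.sum_filter]
    apply Finset.sum_congr rfl
    intro j _
    by_cases h : j = i <;> simp [h]
  have hps := pairsum (fun i j => μ i * μ j * (x i - x j) ^ 2)
  have h2 : ∑ i, ∑ j ∈ Finset.univ.filter (fun j => i < j),
        (μ i * μ j * (x i - x j) ^ 2 + μ j * μ i * (x j - x i) ^ 2)
      = 2 * ∑ i, ∑ j ∈ Finset.univ.filter (fun j => i < j), μ i * μ j * (x i - x j) ^ 2 := by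
    rw [Finset.mul_sum]
    apply Finset.sum_congr rfl
    intro i _
    rw [Finset.mul_sum]
    exact Finset.sum_congr rfl fun j _ => by ring
  have hcomb := hps.symm.trans hdiag
  rw [h2] at hcomb
  linarith [hcomb.trans hfull]

/-- The two identities for a single coordinate. -/
lemma coordCC {k : ℕ} (a : ℝ) (μ x : Fin k → ℝ) (r : Fin k → Fin k → ℝ)
    (hr : ∀ i j, r i j = r j i) (hμsum : ∑ i, μ i = 1)
    (heq : ∀ i, a * x i = ∑ j ∈ Finset.univ.filter (· ≠ i),
      μ j * (x i - x j) / r i j ^ 3) :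
    (a * ∑ i, μ i * x i ^ 2 =
        a * ∑ i, ∑ j ∈ Finset.univ.filter (fun j => i < j), μ i * μ j * (x i - x j) ^ 2) ∧
    (a * ∑ i, μ i * x i ^ 2 =
        ∑ i, ∑ j ∈ Finset.univ.filter (fun j => i < j),
          μ i * μ j / r i j ^ 3 * (x i - x j) ^ 2) := by
  -- second identity
  have hA2 : a * ∑ i, μ i * x i ^ 2
      = ∑ i, ∑ j ∈ Finset.univ.filter (fun j => i < j),
          μ i * μ j / r i j ^ 3 * (x i - x j) ^ 2 := by
    calc a * ∑ i, μ i * x i ^ 2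
        = ∑ i, μ i * x i * (a * x i) := by
          rw [Finset.mul_sum]; exact Finset.sum_congr rfl fun i _ => by ring
      _ = ∑ i, ∑ j ∈ Finset.univ.filter (· ≠ i),
            μ i * x i * (μ j * (x i - x j) / r i j ^ 3) := by
          apply Finset.sum_congr rfl
          intro i _
          rw [heq i, Finset.mul_sum]
      _ = ∑ i, ∑ j ∈ Finset.univ.filter (fun j => i < j),
            (μ i * x i * (μ j * (x i - x j) / r i j ^ 3)
              + μ j * x j * (μ i * (x j - x i) / r j i ^ 3)) :=
          pairsum _
      _ = ∑ i, ∑ j ∈ Finset.univ.filter (fun j => i < j),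
            μ i * μ j / r i j ^ 3 * (x i - x j) ^ 2 := by
          apply Finset.sum_congr rfl; intro i _
          apply Finset.sum_congr rfl; intro j _
          rw [hr j i]; ring
  -- center of mass
  have hZ : a * ∑ i, μ i * x i = 0 := by
    have : a * ∑ i, μ i * x i
        = ∑ i, ∑ j ∈ Finset.univ.filter (· ≠ i),
            μ i * (μ j * (x i - x j) / r i j ^ 3) := by
      rw [Finset.mul_sum]
      apply Finset.sum_congr rfl
      intro i _
      rw [show a * (μ i * x i) = μ i * (a * x i) by ring, heq i, Finset.mul_sum]
    rw [this, pairsum]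
    apply Finset.sum_eq_zero; intro i _
    apply Finset.sum_eq_zero; intro j _
    rw [hr j i]; ring
  -- first identity
  have hexp := sq_expand μ x hμsum
  constructor
  · rw [hexp]
    have : a * (∑ i, μ i * x i) ^ 2 = (a * ∑ i, μ i * x i) * ∑ i, μ i * x i := by ring
    rw [mul_sub, this, hZ]
    ring
  · exact hA2

/-- moment-of-inertia-like identities for anisotropic central
configurations with total mass `1`. -/
theorem stmt10 (k : ℕ) (hk : 2 ≤ k) (a b : ℝ) (μ : Fin k → ℝ)
    (hμ : ∀ i, 0 < μ i) (hμsum : ∑ i, μ i = 1)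
    (p : Fin k → E2) (hinj : Function.Injective p) (hcc : AnisoCC a b μ p) :
    (a * ∑ i, μ i * (p i 0) ^ 2 =
        a * ∑ i, ∑ j ∈ Finset.univ.filter (fun j => i < j), μ i * μ j * (p i 0 - p j 0) ^ 2 ∧
      a * ∑ i, μ i * (p i 0) ^ 2 =
        ∑ i, ∑ j ∈ Finset.univ.filter (fun j => i < j),
          μ i * μ j / ‖p i - p j‖ ^ 3 * (p i 0 - p j 0) ^ 2) ∧
    (b * ∑ i, μ i * (p i 1) ^ 2 =
        b * ∑ i, ∑ j ∈ Finset.univ.filter (fun j => i < j), μ i * μ j * (p i 1 - p j 1) ^ 2 ∧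
      b * ∑ i, μ i * (p i 1) ^ 2 =
        ∑ i, ∑ j ∈ Finset.univ.filter (fun j => i < j),
          μ i * μ j / ‖p i - p j‖ ^ 3 * (p i 1 - p j 1) ^ 2) ∧
    (a * ∑ i, μ i * (p i 0) ^ 2 + b * ∑ i, μ i * (p i 1) ^ 2 =
        ∑ i, ∑ j ∈ Finset.univ.filter (fun j => i < j), μ i * μ j / ‖p i - p j‖) := by
  have hr : ∀ i j : Fin k, ‖p i - p j‖ = ‖p j - p i‖ := fun i j => norm_sub_rev _ _
  have hx := coordCC a μ (fun i => p i 0) (fun i j => ‖p i - p j‖) hr hμsum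
    (fun i => (hcc i).1)
  have hy := coordCC b μ (fun i => p i 1) (fun i j => ‖p i - p j‖) hr hμsum
    (fun i => (hcc i).2)
  refine ⟨hx, hy, ?_⟩
  rw [hx.2, hy.2, ← Finset.sum_add_distrib]
  apply Finset.sum_congr rfl; intro i _
  rw [← Finset.sum_add_distrib]
  apply Finset.sum_congr rfl
  intro j hj
  have hij : i ≠ j := ne_of_lt (Finset.mem_filter.mp hj).2
  have hR : ‖p i - p j‖ ≠ 0 := by
    rw [norm_ne_zero_iff, sub_ne_zero]
    exact fun h => hij (hinj h)
  have hsq : (p i 0 - p j 0) ^ 2 + (p i 1 - p j 1) ^ 2 = ‖p i - p j‖ ^ 2 := by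
    rw [EuclideanSpace.norm_eq, Real.sq_sqrt (by positivity)]
    simp [Fin.sum_univ_two, sq_abs]
  calc μ i * μ j / ‖p i - p j‖ ^ 3 * (p i 0 - p j 0) ^ 2
        + μ i * μ j / ‖p i - p j‖ ^ 3 * (p i 1 - p j 1) ^ 2
      = μ i * μ j * ((p i 0 - p j 0) ^ 2 + (p i 1 - p j 1) ^ 2) / ‖p i - p j‖ ^ 3 := by
        ring
    _ = μ i * μ j * ‖p i - p j‖ ^ 2 / ‖p i - p j‖ ^ 3 := by rw [hsq]
    _ = μ i * μ j / ‖p i - p j‖ := by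
        field_simp
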